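/- Composite advection–diffusion bound via the matrix Λ (key inequality in the proof of Theorem 2.4): Let μ > 0, let β̄ ∈ C¹(Ω̄; ℝ^d) with β̄·n = 0 on ∂Ω, let β' : Ω̄ → ℝ^d be bounded and measurable, and let u ∈ C²(Ω̄) with u = 0 on ∂Ω. Then −∫_Ω ((β̄ + β')·∇u) Δu dx ≤ ∫_Ω (Λ ∇u)·∇u dx + ½ μ ∫_Ω |Δu|² dx, where Λ := ∇_S β̄ − ½(∇·β̄) I + ½ μ^{-1} |β'|² I, ∇_S β̄ is the symmetric part of the Jacobian of β̄, and I is the d×d identity matrix. -/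

import Mathlib

/-!
Put `E = (β̄·∇u)∇u − ½|∇u|²β̄`. By the symmetry of the Hessian,
`div E = (Dβ̄ ∇u)·∇u + (β̄·∇u)Δu − ½(∇·β̄)|∇u|²`, so once `∫_Ω div E = 0` the β̄-part of the bound
is an identity and the β'-part is Young's inequality `−(β'·∇u)Δu ≤ ½μ⁻¹|β'|²|∇u|² + ½μ|Δu|²`.

Only `u = 0` is known on `∂Ω`, so the flux of `E` is not visibly zero. Write `E = G + ½Q` with
`Q = |∇u|²β̄`, whose flux vanishes because `β̄·n = 0`, and `G = (β̄·∇u)∇u − |∇u|²β̄ ⊥ ∇u`.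
The fields `ψ(u)G` with `ψ(0) = 0` give `∫_Ω ψ(u) div G = 0`, and letting `ψ → 1` away from `0`
yields `∫_Ω div G = 0`, because `div G` vanishes where `∇u` does, that is almost everywhere on
`{u = 0}`. This last fact comes from the change of variables formula for `x ↦ x + u(x)w`, which
fixes `{u = 0}` pointwise and has Jacobian `1 + Du(x)w` there.
-/

open MeasureTheory Set
open scoped RealInnerProductSpace

noncomputable section

abbrev Euc (d : ℕ) := EuclideanSpace ℝ (Fin d)

/-- Divergence of a vector field. -/
noncomputable def divg {d : ℕ} (F : Euc d → Euc d) (x : Euc d) : ℝ :=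
  ∑ i, fderiv ℝ (fun y => F y i) x (EuclideanSpace.single i 1)

/-- Laplacian of a scalar field. -/
noncomputable def lapl {d : ℕ} (g : Euc d → ℝ) (x : Euc d) : ℝ :=
  ∑ i, fderiv ℝ (fun y => fderiv ℝ g y (EuclideanSpace.single i 1)) x (EuclideanSpace.single i 1)

/-- Action of the symmetric part ∇_S β̄ = ½(Dβ̄ + Dβ̄ᵀ) of the Jacobian of `βb` at `x` on `v`. -/
noncomputable def symGradApp {d : ℕ} (βb : Euc d → Euc d) (x v : Euc d) : Euc d :=
  (1 / 2 : ℝ) • (fderiv ℝ βb x v + ContinuousLinearMap.adjoint (fderiv ℝ βb x) v)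

/-- Action of the matrix Λ = ∇_S β̄ − ½(∇·β̄)I + ½μ⁻¹|β'|² I at `x` on `v`. -/
noncomputable def lamApp {d : ℕ} (μ : ℝ) (βb β' : Euc d → Euc d) (x v : Euc d) : Euc d :=
  symGradApp βb x v - ((1 / 2 : ℝ) * divg βb x) • v + ((1 / 2 : ℝ) * μ⁻¹ * ‖β' x‖ ^ 2) • v

section Gradient

variable {E : Type*} [NormedAddCommGroup E] [InnerProductSpace ℝ E] [CompleteSpace E]
  {u : E → ℝ}

lemma contDiff_gradient {n : WithTop ℕ∞} (hu : ContDiff ℝ (n + 1) u) :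
    ContDiff ℝ n (gradient u) :=
  (InnerProductSpace.toDual ℝ E).symm.contDiff.comp (hu.fderiv_right le_rfl)

lemma inner_fderiv_gradient {x : E} (hu : DifferentiableAt ℝ (fderiv ℝ u) x) (w z : E) :
    ⟪fderiv ℝ (gradient u) x w, z⟫ = fderiv ℝ (fderiv ℝ u) x w z := by
  have : HasFDerivAt (gradient u)
      ((InnerProductSpace.toDual ℝ E).symm.toContinuousLinearEquiv.toContinuousLinearMap.comp
        (fderiv ℝ (fderiv ℝ u) x)) x :=
    (InnerProductSpace.toDual ℝ E).symm.toContinuousLinearEquiv.hasFDerivAt.comp x hu.hasFDerivAt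
  rw [this.fderiv]
  simp

lemma inner_fderiv_gradient_comm (hu : ContDiff ℝ 2 u) (x w z : E) :
    ⟪fderiv ℝ (gradient u) x w, z⟫ = ⟪fderiv ℝ (gradient u) x z, w⟫ := by
  have hu' : DifferentiableAt ℝ (fderiv ℝ u) x :=
    (hu.fderiv_right (m := 1) le_rfl).differentiable one_ne_zero x
  rw [inner_fderiv_gradient hu', inner_fderiv_gradient hu']
  exact hu.contDiffAt.isSymmSndFDerivAt (by simp) w z

end Gradient

section Divergence

variable {d : ℕ} {F G : Euc d → Euc d} {f : Euc d → ℝ} {x : Euc d}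

lemma fderiv_apply_coord (hF : DifferentiableAt ℝ F x) (i : Fin d) (w : Euc d) :
    fderiv ℝ (fun y => F y i) x w = fderiv ℝ F x w i :=
  congrArg (· w) ((PiLp.hasFDerivAt_apply 2 (F x) i).comp x hF.hasFDerivAt).fderiv

lemma divg_eq_sum (hF : DifferentiableAt ℝ F x) :
    divg F x = ∑ i, fderiv ℝ F x (EuclideanSpace.single i 1) i :=
  Finset.sum_congr rfl fun i _ => fderiv_apply_coord hF i _

lemma ContDiff.continuous_divg (hF : ContDiff ℝ 1 F) : Continuous (divg F) := by
  have hF' := hF.continuous_fderiv one_ne_zero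
  rw [show divg F = fun x => ∑ i, fderiv ℝ F x (EuclideanSpace.single i 1) i from
    funext fun x => divg_eq_sum (hF.differentiable one_ne_zero x)]
  fun_prop

lemma divg_add (hF : DifferentiableAt ℝ F x) (hG : DifferentiableAt ℝ G x) :
    divg (fun y => F y + G y) x = divg F x + divg G x := by
  rw [divg_eq_sum (F := fun y => F y + G y) (hF.add hG), divg_eq_sum hF, divg_eq_sum hG,
    ← Finset.sum_add_distrib, fderiv_fun_add hF hG]
  rfl

lemma divg_sub (hF : DifferentiableAt ℝ F x) (hG : DifferentiableAt ℝ G x) :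
    divg (fun y => F y - G y) x = divg F x - divg G x := by
  rw [divg_eq_sum (F := fun y => F y - G y) (hF.sub hG), divg_eq_sum hF, divg_eq_sum hG,
    ← Finset.sum_sub_distrib, fderiv_fun_sub hF hG]
  rfl

lemma divg_smul (hf : DifferentiableAt ℝ f x) (hG : DifferentiableAt ℝ G x) :
    divg (fun y => f y • G y) x = fderiv ℝ f x (G x) + f x * divg G x := by
  rw [divg_eq_sum (F := fun y => f y • G y) (hf.smul hG), divg_eq_sum hG, fderiv_fun_smul hf hG,
    Finset.mul_sum]
  conv_rhs => rw [← (EuclideanSpace.basisFun (Fin d) ℝ).sum_repr (G x)]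
  simp [map_sum, Finset.sum_add_distrib, mul_comm, add_comm]

lemma lapl_eq_divg_gradient (u : Euc d → ℝ) : lapl u = divg (gradient u) := by
  funext x
  refine Finset.sum_congr rfl fun i _ => ?_
  congr 2
  funext y
  rw [← inner_gradient_left, EuclideanSpace.inner_single_right]
  simp

lemma continuous_lapl {u : Euc d → ℝ} (hu : ContDiff ℝ 2 u) : Continuous (lapl u) :=
  lapl_eq_divg_gradient u ▸ (contDiff_gradient hu).continuous_divg

end Divergence

section LevelSet

variable {E : Type*} [NormedAddCommGroup E] [NormedSpace ℝ E] [FiniteDimensional ℝ E]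
  [MeasurableSpace E] [BorelSpace E] (μ : Measure E) [μ.IsAddHaarMeasure]

open scoped ENNReal

lemma measure_eq_zero_of_fderiv_apply_pos {u : E → ℝ} {s : Set E} (hs : MeasurableSet s)
    (hμs : μ s ≠ ∞) (hu : ∀ x ∈ s, DifferentiableAt ℝ u x) (hus : ∀ x ∈ s, u x = 0) (w : E)
    (hpos : ∀ x ∈ s, 0 < fderiv ℝ u x w) : μ s = 0 := by
  set f' : E → E →L[ℝ] E := fun x => ContinuousLinearMap.id ℝ E + (fderiv ℝ u x).smulRight w
  have hf' : ∀ x ∈ s, HasFDerivWithinAt (fun x => x + u x • w) (f' x) s x := fun x hx =>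
    ((hasFDerivAt_id x).add ((hu x hx).hasFDerivAt.smul_const w)).hasFDerivWithinAt
  have hfs : Set.EqOn (fun x => x + u x • w) id s := fun x hx => by simp [hus x hx]
  have hdet : ∀ x, (f' x).det = 1 + fderiv ℝ u x w := fun x =>
    LinearMap.transvection.det (fderiv ℝ u x).toLinearMap w
  have hcov :=
    lintegral_abs_det_fderiv_eq_addHaar_image μ hs hf' (hfs.injOn_iff.mpr (injOn_id s))
  have hmeas : Measurable fun x => ENNReal.ofReal (fderiv ℝ u x w) :=
    (measurable_fderiv_apply_const ℝ u w).ennreal_ofReal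
  have hsplit : ∫⁻ x in s, ENNReal.ofReal |(f' x).det| ∂μ
      = μ s + ∫⁻ x in s, ENNReal.ofReal (fderiv ℝ u x w) ∂μ := by
    rw [← setLIntegral_one, ← lintegral_add_left measurable_const]
    refine setLIntegral_congr_fun hs fun x hx => ?_
    rw [hdet, abs_of_pos (by linarith [hpos x hx]), ENNReal.ofReal_add zero_le_one (hpos x hx).le,
      ENNReal.ofReal_one]
  rw [hsplit, hfs.image_eq_self] at hcov
  have hzero : ∫⁻ x in s, ENNReal.ofReal (fderiv ℝ u x w) ∂μ = 0 :=
    (ENNReal.add_right_inj hμs).mp (hcov.trans (add_zero _).symm)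
  have : ∀ᵐ x ∂μ.restrict s, False := by
    filter_upwards [(lintegral_eq_zero_iff hmeas).mp hzero, ae_restrict_mem hs] with x hx hxs
    exact (ENNReal.ofReal_pos.mpr (hpos x hxs)).ne' hx
  simpa using this

lemma ae_restrict_fderiv_apply_nonpos {u : E → ℝ} {s : Set E} (hs : MeasurableSet s)
    (hu : ∀ x ∈ s, DifferentiableAt ℝ u x) (hus : ∀ x ∈ s, u x = 0) (w : E) :
    ∀ᵐ x ∂μ.restrict s, fderiv ℝ u x w ≤ 0 := by
  set t := s ∩ {x | 0 < fderiv ℝ u x w}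
  have ht : MeasurableSet t := hs.inter (measurableSet_lt measurable_const
    (measurable_fderiv_apply_const ℝ u w))
  have hnull : μ t = 0 := by
    refine measure_null_of_locally_null t fun x _ => ⟨t ∩ Metric.ball x 1,
      inter_mem_nhdsWithin t (Metric.ball_mem_nhds x one_pos), ?_⟩
    exact measure_eq_zero_of_fderiv_apply_pos μ (ht.inter measurableSet_ball)
      (measure_ne_top_of_subset inter_subset_right measure_ball_lt_top.ne)
      (fun y hy => hu y hy.1.1) (fun y hy => hus y hy.1.1) w fun y hy => hy.1.2
  rw [ae_restrict_iff' hs]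
  filter_upwards [measure_eq_zero_iff_ae_notMem.mp hnull] with x hx hxs
  exact not_lt.mp fun h => hx ⟨hxs, h⟩

theorem ae_fderiv_eq_zero_of_eq_zero {u : E → ℝ} (hu : Differentiable ℝ u) :
    ∀ᵐ x ∂μ, u x = 0 → fderiv ℝ u x = 0 := by
  have hs : MeasurableSet {x | u x = 0} := measurableSet_eq_fun hu.continuous.measurable
    measurable_const
  set b := Module.finBasis ℝ E
  have hle : ∀ᵐ x ∂μ.restrict {x | u x = 0},
      ∀ i, fderiv ℝ u x (b i) ≤ 0 ∧ fderiv ℝ u x (-b i) ≤ 0 :=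
    ae_all_iff.mpr fun i =>
      (ae_restrict_fderiv_apply_nonpos μ hs (fun x _ => hu x) (fun _ hx => hx) (b i)).and
      (ae_restrict_fderiv_apply_nonpos μ hs (fun x _ => hu x) (fun _ hx => hx) (-b i))
  filter_upwards [(ae_restrict_iff' hs).mp hle] with x hx hux
  specialize hx hux
  refine ContinuousLinearMap.coe_injective (b.ext fun i => ?_)
  have := hx i
  simp only [map_neg, neg_nonpos] at this
  simpa using le_antisymm this.1 this.2

end LevelSet

open Filter Topology in
theorem integral_eq_zero_of_integral_comp_mul_eq_zero {X : Type*} [MeasurableSpace X]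
    {μ : Measure X} {u h : X → ℝ} (hu : Measurable u) (hh : Integrable h μ)
    (h0 : ∀ᵐ x ∂μ, u x = 0 → h x = 0)
    (hvanish : ∀ ψ : ℝ → ℝ, ContDiff ℝ 1 ψ → ψ 0 = 0 → ∫ x, ψ (u x) * h x ∂μ = 0) :
    ∫ x, h x ∂μ = 0 := by
  set ψ : ℕ → ℝ → ℝ := fun k t => 1 - Real.exp (-(k * t ^ 2))
  have hψ_contDiff : ∀ k, ContDiff ℝ 1 (ψ k) := fun k => by fun_prop
  have hψ_le : ∀ k t, ‖ψ k t‖ ≤ 1 := fun k t => by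
    have : Real.exp (-(k * t ^ 2)) ≤ 1 :=
      Real.exp_le_one_iff.mpr (by simp only [neg_nonpos]; positivity)
    rw [Real.norm_eq_abs, abs_le]
    constructor <;> linarith [Real.exp_pos (-(k * t ^ 2))]
  have hψ_tendsto : ∀ t ≠ 0, Tendsto (fun k : ℕ => ψ k t) atTop (𝓝 1) := fun t ht => by
    have : Tendsto (fun k : ℕ => -((k : ℝ) * t ^ 2)) atTop atBot :=
      tendsto_neg_atTop_atBot.comp
        (tendsto_natCast_atTop_atTop.atTop_mul_const (by positivity))
    simpa using (Real.tendsto_exp_atBot.comp this).const_sub 1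
  have hlim : Tendsto (fun k => ∫ x, ψ k (u x) * h x ∂μ) atTop (𝓝 (∫ x, h x ∂μ)) := by
    refine tendsto_integral_of_dominated_convergence (fun x => ‖h x‖)
      (fun k => ((hψ_contDiff k).continuous.measurable.comp hu).aestronglyMeasurable.mul
        hh.aestronglyMeasurable) hh.norm (fun k => ae_of_all _ fun x => ?_) ?_
    · rw [norm_mul]
      exact mul_le_of_le_one_left (norm_nonneg _) (hψ_le k (u x))
    · filter_upwards [h0] with x hx
      by_cases hux : u x = 0
      · simp [hx hux]
      · simpa using (hψ_tendsto (u x) hux).mul_const (h x)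
  refine tendsto_nhds_unique hlim (tendsto_const_nhds.congr fun k => ?_)
  exact (hvanish (ψ k) (hψ_contDiff k) (by simp [ψ])).symm

lemma Continuous.integrableOn_of_isBounded {X E : Type*} [MetricSpace X] [ProperSpace X]
    [MeasurableSpace X] [OpensMeasurableSpace X] {μ : Measure X} [IsFiniteMeasureOnCompacts μ]
    [NormedAddCommGroup E] {f : X → E} (hf : Continuous f) {s : Set X}
    (hs : Bornology.IsBounded s) : IntegrableOn f s μ :=
  (hf.continuousOn.integrableOn_compact hs.isCompact_closure).mono_set subset_closure

section DivergenceTheorem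

variable {d : ℕ} {Ω : Set (Euc d)} {n : Euc d → Euc d} {σ : Measure (Euc d)}

lemma integral_divg_eq_zero_of_inner_eq_zero
    (hdiv : ∀ F : Euc d → Euc d, ContDiff ℝ 1 F →
      (∫ x in Ω, divg F x) = ∫ x in frontier Ω, ⟪F x, n x⟫ ∂σ)
    {F : Euc d → Euc d} (hF : ContDiff ℝ 1 F) (hFn : ∀ x ∈ frontier Ω, ⟪F x, n x⟫ = 0) :
    ∫ x in Ω, divg F x = 0 := by
  rw [hdiv F hF, setIntegral_congr_fun isClosed_frontier.measurableSet hFn, integral_zero]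

/-- Testing against `ψ ∘ u` with `ψ 0 = 0` removes the flux through the boundary, and the
orthogonality `⟪∇u, G⟫ = 0` removes the extra term `ψ'(u) ⟪∇u, G⟫` from `div (ψ(u) G)`. -/
lemma integral_divg_eq_zero_of_inner_gradient_eq_zero
    (hdiv : ∀ F : Euc d → Euc d, ContDiff ℝ 1 F →
      (∫ x in Ω, divg F x) = ∫ x in frontier Ω, ⟪F x, n x⟫ ∂σ)
    (hΩ : Bornology.IsBounded Ω) {u : Euc d → ℝ} (hu : ContDiff ℝ 1 u)
    (hu0 : ∀ x ∈ frontier Ω, u x = 0) {G : Euc d → Euc d} (hG : ContDiff ℝ 1 G)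
    (hGu : ∀ x, ⟪gradient u x, G x⟫ = 0)
    (hG0 : ∀ᵐ x ∂volume.restrict Ω, u x = 0 → divg G x = 0) :
    ∫ x in Ω, divg G x = 0 := by
  refine integral_eq_zero_of_integral_comp_mul_eq_zero hu.continuous.measurable
    (hG.continuous_divg.integrableOn_of_isBounded hΩ) hG0 fun ψ hψ hψ0 => ?_
  have hψu : ContDiff ℝ 1 (fun y => ψ (u y)) := hψ.comp hu
  have hdivψG : ∀ x, divg (fun y => ψ (u y) • G y) x = ψ (u x) * divg G x := fun x => by
    rw [divg_smul (hψu.differentiable one_ne_zero x) (hG.differentiable one_ne_zero x),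
      fderiv_fun_comp x (hψ.differentiable one_ne_zero (u x)) (hu.differentiable one_ne_zero x)]
    simp [← inner_gradient_left, hGu]
  simp_rw [← hdivψG]
  exact integral_divg_eq_zero_of_inner_eq_zero hdiv (hψu.smul hG) fun x hx => by
    rw [real_inner_smul_left, hu0 x hx, hψ0, zero_mul]

end DivergenceTheorem

section AdvectionFlux

variable {d : ℕ} {βb : Euc d → Euc d} {u : Euc d → ℝ}

def advectionFlux (βb : Euc d → Euc d) (u : Euc d → ℝ) (y : Euc d) : Euc d :=
  ⟪βb y, gradient u y⟫ • gradient u y - (‖gradient u y‖ ^ 2 / 2) • βb y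

lemma contDiff_advectionFlux (hβ : ContDiff ℝ 1 βb) (hu : ContDiff ℝ 2 u) :
    ContDiff ℝ 1 (advectionFlux βb u) := by
  have hv := contDiff_gradient (n := 1) hu
  exact ((hβ.inner ℝ hv).smul hv).sub (((hv.norm_sq ℝ).div_const 2).smul hβ)

lemma divg_advectionFlux {x : Euc d} (hβ : DifferentiableAt ℝ βb x) (hu : ContDiff ℝ 2 u) :
    divg (advectionFlux βb u) x = ⟪fderiv ℝ βb x (gradient u x), gradient u x⟫
      + ⟪βb x, gradient u x⟫ * lapl u x - ‖gradient u x‖ ^ 2 / 2 * divg βb x := by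
  unfold advectionFlux
  set v := gradient u
  have hv : DifferentiableAt ℝ v x := (contDiff_gradient (n := 1) hu).differentiable one_ne_zero x
  have ha : DifferentiableAt ℝ (fun y => ⟪βb y, v y⟫) x := hβ.inner ℝ hv
  have hq' : HasFDerivAt (fun y => ‖v y‖ ^ 2 / 2)
      ((2⁻¹ : ℝ) • 2 • (innerSL ℝ (v x)).comp (fderiv ℝ v x)) x := by
    simpa only [div_eq_mul_inv] using (hv.hasFDerivAt.norm_sq : HasFDerivAt _ _ x).mul_const 2⁻¹
  have hq : DifferentiableAt ℝ (fun y => ‖v y‖ ^ 2 / 2) x := hq'.differentiableAt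
  have hfq : fderiv ℝ (fun y => ‖v y‖ ^ 2 / 2) x (βb x) = ⟪fderiv ℝ v x (βb x), v x⟫ := by
    rw [hq'.fderiv]
    simp [real_inner_comm]
  rw [divg_sub (F := fun y => ⟪βb y, v y⟫ • v y) (G := fun y => (‖v y‖ ^ 2 / 2) • βb y)
    (ha.smul hv) (hq.smul hβ), divg_smul ha hv,
    divg_smul hq hβ, fderiv_inner_apply ℝ hβ hv, ← lapl_eq_divg_gradient, hfq,
    real_inner_comm (fderiv ℝ v x (v x)), inner_fderiv_gradient_comm hu x (v x)]
  ring

theorem integral_divg_advectionFlux_eq_zero {Ω : Set (Euc d)} {n : Euc d → Euc d}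
    {σ : Measure (Euc d)}
    (hdiv : ∀ F : Euc d → Euc d, ContDiff ℝ 1 F →
      (∫ x in Ω, divg F x) = ∫ x in frontier Ω, ⟪F x, n x⟫ ∂σ)
    (hΩ : Bornology.IsBounded Ω) (hβ : ContDiff ℝ 1 βb)
    (hβn : ∀ x ∈ frontier Ω, ⟪βb x, n x⟫ = 0) (hu : ContDiff ℝ 2 u)
    (hu0 : ∀ x ∈ frontier Ω, u x = 0) :
    ∫ x in Ω, divg (advectionFlux βb u) x = 0 := by
  set v := gradient u
  have hv : ContDiff ℝ 1 v := contDiff_gradient hu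
  set Q : Euc d → Euc d := fun y => ‖v y‖ ^ 2 • βb y
  set G : Euc d → Euc d := fun y => ⟪βb y, v y⟫ • v y - Q y
  have hQ : ContDiff ℝ 1 Q := (hv.norm_sq ℝ).smul hβ
  have hG : ContDiff ℝ 1 G := ((hβ.inner ℝ hv).smul hv).sub hQ
  have hdivE : ∀ x, divg (advectionFlux βb u) x = divg G x + 1 / 2 * divg Q x := fun x => by
    have hflux : advectionFlux βb u = fun y => G y + (1 / 2 : ℝ) • Q y := by
      funext y
      simp only [advectionFlux, G, Q, v]
      module
    have hQx := hQ.differentiable one_ne_zero x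
    rw [hflux, divg_add (G := fun y => (1 / 2 : ℝ) • Q y) (hG.differentiable one_ne_zero x)
      (by fun_prop), divg_smul (f := fun _ => (1 / 2 : ℝ)) (differentiableAt_const _) hQx]
    simp
  have hdivG : ∀ x, v x = 0 → divg G x = 0 := fun x hvx => by
    have hv_x := hv.differentiable one_ne_zero x
    have hβ_x := hβ.differentiable one_ne_zero x
    have hq := hv_x.hasFDerivAt.norm_sq
    have ha := hβ_x.inner ℝ hv_x
    show divg (fun y => ⟪βb y, v y⟫ • v y - ‖v y‖ ^ 2 • βb y) x = 0
    rw [divg_sub (F := fun y => ⟪βb y, v y⟫ • v y) (G := fun y => ‖v y‖ ^ 2 • βb y)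
      (ha.smul hv_x) (hq.differentiableAt.smul hβ_x), divg_smul ha hv_x,
      divg_smul hq.differentiableAt hβ_x, hq.fderiv]
    simp [hvx]
  have hG0 : ∀ᵐ x ∂volume.restrict Ω, u x = 0 → divg G x = 0 := by
    refine ae_restrict_of_ae ?_
    filter_upwards [ae_fderiv_eq_zero_of_eq_zero volume (hu.differentiable two_ne_zero)]
      with x hx hux
    exact hdivG x (by simp [v, gradient, hx hux])
  have hGu : ∀ x, ⟪v x, G x⟫ = 0 := fun x => by
    simp only [G, Q, inner_sub_right, real_inner_smul_right, real_inner_self_eq_norm_sq,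
      real_inner_comm (βb x)]
    ring
  have hG_int := integral_divg_eq_zero_of_inner_gradient_eq_zero hdiv hΩ
    (hu.of_le one_le_two) hu0 hG hGu hG0
  have hQ_int := integral_divg_eq_zero_of_inner_eq_zero hdiv hQ fun x hx => by
    simp only [Q, real_inner_smul_left, hβn x hx, mul_zero]
  simp_rw [hdivE]
  rw [integral_add (hG.continuous_divg.integrableOn_of_isBounded hΩ)
    ((hQ.continuous_divg.integrableOn_of_isBounded hΩ).const_mul _), integral_const_mul,
    hG_int, hQ_int, mul_zero, add_zero]

end AdvectionFlux

lemma neg_inner_mul_le_young {E : Type*} [NormedAddCommGroup E] [InnerProductSpace ℝ E]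
    {μ : ℝ} (hμ : 0 < μ) (b v : E) (t : ℝ) :
    -(⟪b, v⟫ * t) ≤ 1 / 2 * μ⁻¹ * ‖b‖ ^ 2 * ‖v‖ ^ 2 + 1 / 2 * μ * t ^ 2 := by
  have hcs : -(⟪b, v⟫ * t) ≤ ‖b‖ * ‖v‖ * |t| :=
    calc -(⟪b, v⟫ * t) ≤ |⟪b, v⟫| * |t| := by rw [← abs_mul]; exact neg_le_abs _
      _ ≤ ‖b‖ * ‖v‖ * |t| := by gcongr; exact abs_real_inner_le_norm b v
  have hsq : 0 ≤ μ⁻¹ * (‖b‖ * ‖v‖ - μ * |t|) ^ 2 := by positivity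
  have hexp : μ⁻¹ * (‖b‖ * ‖v‖ - μ * |t|) ^ 2
      = μ⁻¹ * ‖b‖ ^ 2 * ‖v‖ ^ 2 - 2 * (‖b‖ * ‖v‖ * |t|) + μ * t ^ 2 := by
    field_simp
    rw [← sq_abs t]
    ring
  linarith

section CompositeBound

variable {d : ℕ} {βb β' : Euc d → Euc d} {u : Euc d → ℝ}

lemma inner_lamApp_self (μ : ℝ) (βb β' : Euc d → Euc d) (x v : Euc d) :
    ⟪lamApp μ βb β' x v, v⟫ = ⟪fderiv ℝ βb x v, v⟫ - divg βb x / 2 * ‖v‖ ^ 2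
      + 1 / 2 * μ⁻¹ * ‖β' x‖ ^ 2 * ‖v‖ ^ 2 := by
  rw [lamApp, symGradApp, inner_add_left, inner_sub_left, real_inner_smul_left,
    real_inner_smul_left, real_inner_smul_left, inner_add_left,
    ContinuousLinearMap.adjoint_inner_left, real_inner_comm (fderiv ℝ βb x v) v,
    real_inner_self_eq_norm_sq]
  ring

lemma neg_inner_mul_lapl_add_divg_advectionFlux_le {μ : ℝ} (hμ : 0 < μ) {x : Euc d}
    (hβ : DifferentiableAt ℝ βb x) (hu : ContDiff ℝ 2 u) :
    -(⟪βb x + β' x, gradient u x⟫ * lapl u x) + divg (advectionFlux βb u) x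
      ≤ ⟪lamApp μ βb β' x (gradient u x), gradient u x⟫ + 1 / 2 * μ * lapl u x ^ 2 := by
  rw [divg_advectionFlux hβ hu, inner_lamApp_self, inner_add_left]
  linarith [neg_inner_mul_le_young hμ (β' x) (gradient u x) (lapl u x)]

lemma integrableOn_inner_mul_lapl {Ω : Set (Euc d)} (hΩ : Bornology.IsBounded Ω)
    (hβ : Continuous βb) (hβ' : Measurable β') {M : ℝ} (hM : ∀ x, ‖β' x‖ ≤ M)
    (hu : ContDiff ℝ 2 u) :
    IntegrableOn (fun x => ⟪βb x + β' x, gradient u x⟫ * lapl u x) Ω := by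
  have hv := (contDiff_gradient (n := 1) hu).continuous
  have hΔ := continuous_lapl hu
  have hbound : Continuous fun x => (‖βb x‖ + M) * ‖gradient u x‖ * |lapl u x| := by fun_prop
  refine Integrable.mono' (hbound.integrableOn_of_isBounded hΩ)
    ((hβ.measurable.add hβ').inner hv.measurable |>.mul hΔ.measurable).aestronglyMeasurable
    (ae_of_all _ fun x => ?_)
  rw [norm_mul, Real.norm_eq_abs, Real.norm_eq_abs]
  gcongr
  exact (abs_real_inner_le_norm _ _).trans
    (mul_le_mul_of_nonneg_right ((norm_add_le _ _).trans (by linarith [hM x])) (norm_nonneg _))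

lemma integrableOn_inner_lamApp {Ω : Set (Euc d)} (hΩ : Bornology.IsBounded Ω) (μ : ℝ)
    (hβ : ContDiff ℝ 1 βb) (hβ' : Measurable β') {M : ℝ} (hM : ∀ x, ‖β' x‖ ≤ M)
    (hu : ContDiff ℝ 2 u) :
    IntegrableOn (fun x => ⟪lamApp μ βb β' x (gradient u x), gradient u x⟫) Ω := by
  have hv := (contDiff_gradient (n := 1) hu).continuous
  have hDβ := hβ.continuous_fderiv one_ne_zero
  have hdivβ := hβ.continuous_divg
  simp_rw [inner_lamApp_self]
  have hcont : Continuous fun x => ⟪fderiv ℝ βb x (gradient u x), gradient u x⟫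
      - divg βb x / 2 * ‖gradient u x‖ ^ 2 := by fun_prop
  refine IntegrableOn.add (hcont.integrableOn_of_isBounded hΩ) ?_
  refine ((hv.norm.pow 2).integrableOn_of_isBounded hΩ).bdd_mul (c := |1 / 2 * μ⁻¹| * M ^ 2)
    ((hβ'.norm.pow_const 2).const_mul _).aestronglyMeasurable (ae_of_all _ fun x => ?_)
  rw [norm_mul, norm_pow, norm_norm, Real.norm_eq_abs]
  gcongr
  exact hM x

end CompositeBound

theorem composite_advection_diffusion_bound_general
    (d : ℕ) (Ω : Set (Euc d))
    (hΩb : Bornology.IsBounded Ω)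
    (n : Euc d → Euc d)
    (σ : Measure (Euc d))
    -- the divergence theorem holds on Ω
    (hdivthm : ∀ F : Euc d → Euc d, ContDiff ℝ 1 F →
      (∫ x in Ω, divg F x) = ∫ x in frontier Ω, ⟪F x, n x⟫ ∂σ)
    (μ : ℝ) (hμ : 0 < μ)
    (βb : Euc d → Euc d) (hβb : ContDiff ℝ 1 βb)
    (hβbn : ∀ x ∈ frontier Ω, ⟪βb x, n x⟫ = 0)
    (β' : Euc d → Euc d) (hβ'meas : Measurable β') (hβ'bdd : ∃ M : ℝ, ∀ x, ‖β' x‖ ≤ M)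
    (u : Euc d → ℝ) (hu : ContDiff ℝ 2 u)
    (hubc : ∀ x ∈ frontier Ω, u x = 0) :
    -(∫ x in Ω, ⟪βb x + β' x, gradient u x⟫ * lapl u x) ≤
      (∫ x in Ω, ⟪lamApp μ βb β' x (gradient u x), gradient u x⟫) +
        (1 / 2 : ℝ) * μ * ∫ x in Ω, (lapl u x) ^ 2 := by
  obtain ⟨M, hM⟩ := hβ'bdd
  have hlhs := integrableOn_inner_mul_lapl hΩb hβb.continuous hβ'meas hM hu
  have hrhs := integrableOn_inner_lamApp hΩb μ hβb hβ'meas hM hu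
  have hflux := (contDiff_advectionFlux hβb hu).continuous_divg.integrableOn_of_isBounded
    (μ := volume) hΩb
  have hlapl : IntegrableOn (fun x => lapl u x ^ 2) Ω :=
    ((continuous_lapl hu).pow 2).integrableOn_of_isBounded hΩb
  have hmono := integral_mono (hlhs.neg.add hflux) (hrhs.add (hlapl.const_mul (1 / 2 * μ)))
    fun x => neg_inner_mul_lapl_add_divg_advectionFlux_le hμ
      (hβb.differentiable one_ne_zero x) hu
  rw [integral_add' hlhs.neg hflux, integral_neg',
    integral_divg_advectionFlux_eq_zero hdivthm hΩb hβb hβbn hu hubc,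
    integral_add' hrhs (hlapl.const_mul _), integral_const_mul] at hmono
  linarith

/-- composite advection–diffusion bound via the matrix Λ, key inequality
in the proof of Theorem 2.4: on a bounded open (Lipschitz) domain Ω ⊂ ℝ^d (d = 2,3) for
which the divergence theorem holds, if μ > 0, β̄ ∈ C¹ with β̄·n = 0 on ∂Ω, β' is bounded
and measurable and u ∈ C² with u = 0 on ∂Ω, then
−∫_Ω ((β̄+β')·∇u) Δu dx ≤ ∫_Ω (Λ∇u)·∇u dx + ½μ∫_Ω |Δu|² dx. -/
theorem composite_advection_diffusion_bound
    (d : ℕ) (hd : d = 2 ∨ d = 3) (Ω : Set (Euc d))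
    (hΩo : IsOpen Ω) (hΩb : Bornology.IsBounded Ω) (hΩne : Ω.Nonempty)
    (n : Euc d → Euc d) (hn : ∀ x ∈ frontier Ω, ‖n x‖ = 1)
    (σ : Measure (Euc d))
    -- the divergence theorem holds on Ω
    (hdivthm : ∀ F : Euc d → Euc d, ContDiff ℝ 1 F →
      (∫ x in Ω, divg F x) = ∫ x in frontier Ω, ⟪F x, n x⟫ ∂σ)
    (μ : ℝ) (hμ : 0 < μ)
    (βb : Euc d → Euc d) (hβb : ContDiff ℝ 1 βb)
    (hβbn : ∀ x ∈ frontier Ω, ⟪βb x, n x⟫ = 0)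
    (β' : Euc d → Euc d) (hβ'meas : Measurable β') (hβ'bdd : ∃ M : ℝ, ∀ x, ‖β' x‖ ≤ M)
    (u : Euc d → ℝ) (hu : ContDiff ℝ 2 u)
    (hubc : ∀ x ∈ frontier Ω, u x = 0) :
    -(∫ x in Ω, ⟪βb x + β' x, gradient u x⟫ * lapl u x) ≤
      (∫ x in Ω, ⟪lamApp μ βb β' x (gradient u x), gradient u x⟫) +
        (1 / 2 : ℝ) * μ * ∫ x in Ω, (lapl u x) ^ 2 :=
  composite_advection_diffusion_bound_general d Ω hΩb n σ hdivthm μ hμ βb hβb hβbn β' hβ'meas hβ'bdd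
    u hu hubc

end
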